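/- arXiv:2104.13159 — 7 statements merged into one kernel-verified Lean document; each statement's English description precedes it below -/
import Mathlib

section
/- The function ι(p) := p·ln(1 + 1/(2κp)) + p − μ + a has a root in (0, ∞) if and only if μ > a; moreover any such root is unique and lies in the open interval (0, μ − a). -/
open Real Set

/-!
With `c = 1 / (2κ)` the equation `ι(p) = 0` reads `F(p) = μ - a` for
`F(p) = p log(1 + c/p) + p`. On `(0, ∞)` the function `F` is strictly increasing (its derivative
is `log(1 + c/p) + p/(p + c) > 0`) and `F(p) > p`, so a root is unique and lies below `μ - a`,
and `μ > a` is necessary. Conversely, `F(p) = p log(p + c) - p log p + p` extends continuously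
by `0` at `p = 0`, so for `μ > a` the intermediate value theorem on `[0, μ - a]` gives a root.
-/

namespace Real

variable {c p : ℝ}

lemma mul_log_one_add_div_pos (hc : 0 < c) (hp : 0 < p) : 0 < p * log (1 + c / p) :=
  mul_pos hp (log_pos (by simpa using div_pos hc hp))

lemma lt_mul_log_one_add_div_add_self (hc : 0 < c) (hp : 0 < p) :
    p < p * log (1 + c / p) + p := by
  linarith [mul_log_one_add_div_pos hc hp]

lemma mul_log_one_add_div_eq (hp : p ≠ 0) (hpc : p + c ≠ 0) :
    p * log (1 + c / p) = p * log (p + c) - p * log p := by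
  rw [one_add_div hp, log_div hpc hp, mul_sub]

lemma hasDerivAt_mul_log_one_add_div_add_self (hc : 0 ≤ c) (hp : 0 < p) :
    HasDerivAt (fun x ↦ x * log (1 + c / x) + x) (log (1 + c / p) + p / (p + c)) p := by
  have hpos : 0 < 1 + c / p := by positivity
  have hinner : HasDerivAt (fun x ↦ 1 + c / x) (-c / p ^ 2) p := by
    simpa [div_eq_mul_inv, neg_div] using ((hasDerivAt_inv hp.ne').const_mul c).const_add 1
  refine (((hasDerivAt_id' p).mul (hinner.log hpos.ne')).add (hasDerivAt_id' p)).congr_deriv ?_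
  field_simp
  ring

lemma strictMonoOn_mul_log_one_add_div_add_self (hc : 0 ≤ c) :
    StrictMonoOn (fun x ↦ x * log (1 + c / x) + x) (Ioi 0) := by
  have hderiv : ∀ x ∈ Ioi (0 : ℝ), HasDerivAt (fun x ↦ x * log (1 + c / x) + x)
      (log (1 + c / x) + x / (x + c)) x :=
    fun x hx ↦ hasDerivAt_mul_log_one_add_div_add_self hc hx
  refine strictMonoOn_of_deriv_pos (convex_Ioi 0)
    (fun x hx ↦ (hderiv x hx).continuousAt.continuousWithinAt) fun x hx ↦ ?_
  replace hx : 0 < x := by rwa [interior_Ioi] at hx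
  have hlog : 0 ≤ log (1 + c / x) := log_nonneg (by simpa using div_nonneg hc hx.le)
  have hfrac : 0 < x / (x + c) := by positivity
  rw [(hderiv x hx).deriv]
  linarith

lemma exists_mul_log_one_add_div_add_self_eq {d : ℝ} (hc : 0 < c) (hd : 0 < d) :
    ∃ p ∈ Ioo 0 d, p * log (1 + c / p) + p = d := by
  set G : ℝ → ℝ := fun x ↦ x * log (x + c) - x * log x + x
  have hG : ∀ x, 0 < x → G x = x * log (1 + c / x) + x := fun x hx ↦ by
    rw [mul_log_one_add_div_eq hx.ne' (by linarith)]
  have hcont : ContinuousOn G (Icc 0 d) := by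
    refine ((continuousOn_id.mul ?_).sub continuous_mul_log.continuousOn).add continuousOn_id
    exact (continuous_add_const c).continuousOn.log fun x hx ↦ by linarith [hx.1]
  have hd_mem : d ∈ Ioo (G 0) (G d) := by
    rw [hG d hd]
    exact ⟨by simpa [G] using hd, lt_mul_log_one_add_div_add_self hc hd⟩
  obtain ⟨p, hp, hGp⟩ := intermediate_value_Ioo hd.le hcont hd_mem
  exact ⟨p, hp, (hG p hp.1).symm.trans hGp⟩

end Real

theorem iota_root_iff (κ μ a : ℝ) (hκ : 0 < κ) :
    ((∃ p ∈ Set.Ioi (0 : ℝ),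
        p * Real.log (1 + 1 / (2 * κ * p)) + p - μ + a = 0) ↔ μ > a) ∧
    (∀ p ∈ Set.Ioi (0 : ℝ),
        p * Real.log (1 + 1 / (2 * κ * p)) + p - μ + a = 0 →
        p ∈ Set.Ioo 0 (μ - a) ∧
        ∀ q ∈ Set.Ioi (0 : ℝ),
          q * Real.log (1 + 1 / (2 * κ * q)) + q - μ + a = 0 → q = p) := by
  have hc : 0 < 1 / (2 * κ) := by positivity
  have hroot : ∀ p, p * log (1 + 1 / (2 * κ * p)) + p - μ + a = 0 ↔
      p * log (1 + 1 / (2 * κ) / p) + p = μ - a := fun p ↦ by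
    rw [div_div]; constructor <;> intro h <;> linarith
  have hbelow : ∀ p ∈ Ioi (0 : ℝ), p * log (1 + 1 / (2 * κ * p)) + p - μ + a = 0 →
      p < μ - a := fun p hp h ↦
    (hroot p).1 h ▸ lt_mul_log_one_add_div_add_self hc hp
  refine ⟨⟨fun ⟨p, hp, h⟩ ↦ ?_, fun hμa ↦ ?_⟩, fun p hp hpr ↦ ⟨⟨hp, hbelow p hp hpr⟩, ?_⟩⟩
  · linarith [hbelow p hp h, mem_Ioi.1 hp]
  · obtain ⟨p, hp, h⟩ := exists_mul_log_one_add_div_add_self_eq hc (sub_pos.2 hμa)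
    exact ⟨p, hp.1, (hroot p).2 h⟩
  · intro q hq hqr
    exact (strictMonoOn_mul_log_one_add_div_add_self hc.le).injOn hq hp
      (((hroot q).1 hqr).trans ((hroot p).1 hpr).symm)
end

section
/- The function φ(p) := p·ln(1 + 1/(2κp)) − √(c/κ), defined for p > 0 with κ, c > 0, has a root in (0, ∞) if and only if c < 1/(4κ); moreover such a root is unique. -/
/-!
With `a = 1 / (2κ)` the equation reads `p * log (1 + a / p) = √(c / κ)`. On `(0, ∞)` the map
`p ↦ p * log (1 + a / p)` is strictly increasing, equals `p * log (p + a) - p * log p` and hence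
extends continuously by `0` at `p = 0`, stays below `a` because `log (1 + x) < x`, and tends to `a`
at infinity. Its range is therefore `(0, a)`, and `√(c / κ) < 1 / (2κ)` is `c < 1 / (4κ)`.
-/

open Real Set Filter

section MulLogOneAddDiv

variable {a p : ℝ}

lemma mul_log_one_add_div_lt (ha : 0 < a) (hp : 0 < p) : p * log (1 + a / p) < a := by
  have hx : 0 < a / p := div_pos ha hp
  calc p * log (1 + a / p) < p * (a / p) := by
        gcongr
        linarith [log_lt_sub_one_of_pos (by linarith : 0 < 1 + a / p) (by linarith)]
    _ = a := mul_div_cancel₀ a hp.ne'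

lemma mul_log_one_add_div_eq (ha : 0 ≤ a) (hp : 0 < p) :
    p * log (1 + a / p) = p * log (p + a) - p * log p := by
  rw [one_add_div hp.ne', log_div (by positivity) hp.ne', mul_sub]

lemma hasDerivAt_mul_log_one_add_div (ha : 0 ≤ a) (hp : 0 < p) :
    HasDerivAt (fun x => x * log (1 + a / x)) (log (1 + a / p) - a / (p + a)) p := by
  have hpa : 0 < p + a := by linarith
  have hinner : HasDerivAt (fun x => 1 + a / x) (-(a / p ^ 2)) p := by
    simpa [div_eq_mul_inv] using ((hasDerivAt_inv hp.ne').const_mul a).const_add 1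
  refine ((hasDerivAt_id' p).mul (hinner.log (by positivity))).congr_deriv ?_
  field_simp
  ring

-- The derivative `log y - (1 - 1 / y)` at `y = 1 + a / p > 1` is positive by `log (1 / y) < 1 / y - 1`.
lemma strictMonoOn_mul_log_one_add_div (ha : 0 < a) :
    StrictMonoOn (fun p => p * log (1 + a / p)) (Ioi 0) := by
  refine strictMonoOn_of_deriv_pos (convex_Ioi 0)
    (fun p hp => (hasDerivAt_mul_log_one_add_div ha.le hp).continuousAt.continuousWithinAt)
    fun p hp => ?_
  rw [interior_Ioi] at hp
  have hp : 0 < p := hp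
  rw [(hasDerivAt_mul_log_one_add_div ha.le hp).deriv, sub_pos]
  have hy : (1 + a / p)⁻¹ = p / (p + a) := by field_simp
  have hlog := log_lt_sub_one_of_pos (x := (1 + a / p)⁻¹) (by positivity)
    (by rw [hy, ne_eq, div_eq_one_iff_eq (by positivity)]; linarith)
  rw [log_inv, hy] at hlog
  have hsub : p / (p + a) - 1 = -(a / (p + a)) := by field_simp; ring
  linarith

lemma exists_mul_log_one_add_div_eq_iff {t : ℝ} (ha : 0 < a) (ht : 0 < t) :
    (∃ p ∈ Ioi 0, p * log (1 + a / p) = t) ↔ t < a := by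
  refine ⟨fun ⟨p, hp, hpt⟩ => hpt ▸ mul_log_one_add_div_lt ha hp, fun hta => ?_⟩
  obtain ⟨b, hbt, hb⟩ := ((tendsto_mul_log_one_add_div_atTop a).eventually
    (eventually_gt_nhds hta) |>.and (eventually_gt_atTop 0)).exists
  let g : ℝ → ℝ := fun x => x * log (x + a) - x * log x
  have hg : ContinuousOn g (Icc 0 b) :=
    (continuousOn_id.mul ((continuousOn_id.add continuousOn_const).log
      fun x hx => by simp only [Pi.add_apply, id]; linarith [hx.1])).sub
      continuous_mul_log.continuousOn
  have htg : t ∈ Icc (g 0) (g b) :=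
    ⟨by simp [g, ht.le], by simp only [g, ← mul_log_one_add_div_eq ha.le hb]; exact hbt.le⟩
  obtain ⟨p, hp, hgp⟩ := intermediate_value_Icc hb.le hg htg
  have hp0 : 0 < p := hp.1.lt_of_ne fun h => by simp [← h, g] at hgp; linarith
  exact ⟨p, hp0, (mul_log_one_add_div_eq ha.le hp0).trans hgp⟩

end MulLogOneAddDiv

theorem phi_root_iff (κ c : ℝ) (hκ : 0 < κ) (hc : 0 < c) :
    ((∃ p ∈ Set.Ioi (0 : ℝ),
        p * Real.log (1 + 1 / (2 * κ * p)) - Real.sqrt (c / κ) = 0) ↔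
      c < 1 / (4 * κ)) ∧
    (∀ p ∈ Set.Ioi (0 : ℝ),
      p * Real.log (1 + 1 / (2 * κ * p)) - Real.sqrt (c / κ) = 0 →
      ∀ q ∈ Set.Ioi (0 : ℝ),
        q * Real.log (1 + 1 / (2 * κ * q)) - Real.sqrt (c / κ) = 0 → q = p) := by
  have ha : 0 < 1 / (2 * κ) := by positivity
  have hdiv (p : ℝ) : 1 / (2 * κ * p) = 1 / (2 * κ) / p := (div_div _ _ _).symm
  simp only [sub_eq_zero, hdiv]
  refine ⟨?_, fun p hp hpt q hq hqt =>
    (strictMonoOn_mul_log_one_add_div ha).injOn hq hp (hqt.trans hpt.symm)⟩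
  have hbound : (1 / (2 * κ)) ^ 2 * κ = 1 / (4 * κ) := by field_simp; ring
  rw [exists_mul_log_one_add_div_eq_iff ha (sqrt_pos.2 (by positivity)), sqrt_lt' ha,
    div_lt_iff₀ hκ, hbound]
end

section
/- For every x > 0, the inequality 2·ln(1/x + 1)·(1 − 2x) + ((2x+1)/(x+1))·(1 − x) − (ln(1/x + 1))²·(2x+1) < 0 holds. -/
/-!
With `t = 1 / (2x + 1) ∈ (0, 1)` one has `log (1 + 1/x) = log ((1 + t) / (1 - t))`, whose series
`2t + 2t³/3 + 2t⁵/5 + ⋯` has positive terms, so `L := log (1 + 1/x) ≥ 2t + 2t³/3`.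
The left-hand side is `-(2x + 1)² / (2x + 2)` times the quadratic
`Q(L) = (1 + t) L² - 2 (2t - 1)(1 + t) L - (3t - 1)`, whose vertex `2t - 1` lies to the left of
`2t + 2t³/3`; hence `Q(L) ≥ Q(2t + 2t³/3)`, which is a positive polynomial in `t` on `(0, 1)`.
-/

open Real

theorem two_mul_add_le_log_one_add_inv {a : ℝ} (ha : 0 < a) :
    2 * (1 / (2 * a + 1)) + 2 / 3 * (1 / (2 * a + 1)) ^ 3 ≤ log (1 + a⁻¹) := by
  have h := sum_le_hasSum (Finset.range 2) (fun k _ => by positivity) (hasSum_log_one_add_inv ha)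
  norm_num [Finset.sum_range_succ] at h ⊢
  linarith

theorem quadratic_pos_of_two_mul_add_le {t L : ℝ} (ht0 : 0 < t) (ht1 : t < 1)
    (hL : 2 * t + 2 / 3 * t ^ 3 ≤ L) :
    0 < (1 + t) * L ^ 2 - 2 * (2 * t - 1) * (1 + t) * L - (3 * t - 1) := by
  set a := 2 * t + 2 / 3 * t ^ 3 with ha
  have hQa : 0 < (1 + t) * a ^ 2 - 2 * (2 * t - 1) * (1 + t) * a - (3 * t - 1) := by
    -- Nine times this is `9 + 9t - 24t³ + 12t⁴ + 4t⁶ + 4t⁷`, and `12t²(1 - t)² ≥ 0` bounds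
    -- `-24t³ + 12t⁴` below by `-12t²`.
    have h : 0 < 9 + 9 * t - 24 * t ^ 3 + 12 * t ^ 4 + 4 * t ^ 6 + 4 * t ^ 7 := by
      nlinarith [sq_nonneg (t ^ 2 - t), mul_pos ht0 (sub_pos.2 ht1), pow_pos ht0 6, pow_pos ht0 7]
    linear_combination h / 9
  have hpast_vertex : 0 ≤ (1 + t) * (L - a) * (L + a - 2 * (2 * t - 1)) := by
    have : 0 ≤ L + a - 2 * (2 * t - 1) := by linarith [pow_pos ht0 3]
    have : 0 ≤ L - a := sub_nonneg.2 hL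
    positivity
  linear_combination hQa + hpast_vertex

theorem concavity_ineq (x : ℝ) (hx : 0 < x) :
    2 * Real.log (1 / x + 1) * (1 - 2 * x) +
      (2 * x + 1) / (x + 1) * (1 - x) -
      (Real.log (1 / x + 1)) ^ 2 * (2 * x + 1) < 0 := by
  rw [one_div, add_comm x⁻¹ 1]
  have ht1 : 1 / (2 * x + 1) < 1 := by rw [div_lt_one] <;> linarith
  have hQ := quadratic_pos_of_two_mul_add_le (by positivity) ht1 (two_mul_add_le_log_one_add_inv hx)
  set L := log (1 + x⁻¹)
  set t := 1 / (2 * x + 1) with ht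
  have key : 2 * L * (1 - 2 * x) + (2 * x + 1) / (x + 1) * (1 - x) - L ^ 2 * (2 * x + 1)
      = -((2 * x + 1) ^ 2 / (2 * x + 2)) *
        ((1 + t) * L ^ 2 - 2 * (2 * t - 1) * (1 + t) * L - (3 * t - 1)) := by
    rw [ht]
    field_simp
    ring
  rw [key]
  exact mul_neg_of_neg_of_pos (neg_neg_of_pos (by positivity)) hQ
end

section
/- For every x > 0, the inequality 3·(ln(1/x+1))³·(x+1)³ + (ln(1/x+1))²·(x+1)·(−14x − 13) + 19·ln(1/x+1)·(x+1) − 8 > 0 holds. -/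
open Real

lemma sinh_lt_mul_cosh (v : ℝ) (hv : 0 < v) : Real.sinh v < v * Real.cosh v := by
  have mono : StrictMonoOn (fun v : ℝ => v * Real.cosh v - Real.sinh v) (Set.Ici 0) := by
    apply strictMonoOn_of_deriv_pos (convex_Ici 0)
    · exact ((continuous_id.mul Real.continuous_cosh).sub Real.continuous_sinh).continuousOn
    · intro t ht
      rw [interior_Ici, Set.mem_Ioi] at ht
      have h1 : HasDerivAt (fun v : ℝ => v * Real.cosh v - Real.sinh v)
          (1 * Real.cosh t + t * Real.sinh t - Real.cosh t) t :=
        ((hasDerivAt_id t).mul (Real.hasDerivAt_cosh t)).sub (Real.hasDerivAt_sinh t)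
      rw [h1.deriv]
      have := Real.sinh_pos_iff.2 ht
      nlinarith
  have h := mono (Set.self_mem_Ici) (Set.mem_Ici.2 hv.le) hv
  simpa using h

lemma log_lower (x : ℝ) (hx : 0 < x) : 2 / (2*x+1) < Real.log (1/x + 1) := by
  set u := Real.log (1/x + 1) with hu
  have hpos : (0:ℝ) < 1/x + 1 := by positivity
  have hu0 : 0 < u := Real.log_pos (by rw [lt_add_iff_pos_left]; positivity)
  have he : Real.exp u = 1/x + 1 := Real.exp_log hpos
  have h := sinh_lt_mul_cosh (u/2) (by linarith)
  rw [Real.sinh_eq, Real.cosh_eq, Real.exp_neg] at h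
  set w := Real.exp (u/2) with hwdef
  have hw : 0 < w := Real.exp_pos _
  have hww : w * w = 1/x + 1 := by
    rw [hwdef, ← Real.exp_add]
    rw [show u/2 + u/2 = u by ring]
    exact he
  have hwi : w * w⁻¹ = 1 := mul_inv_cancel₀ hw.ne'
  have h2 : w * w - 1 < u/2 * (w * w + 1) := by
    have h3 := mul_lt_mul_of_pos_left h hw
    have : w * ((w - w⁻¹)/2) = (w * w - 1)/2 := by
      field_simp
    nlinarith [h3, hw]
  have hxw : x * (w * w) = x + 1 := by
    rw [hww]; field_simp; ring
  rw [div_lt_iff₀ (by linarith : (0:ℝ) < 2*x+1)]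
  nlinarith [mul_lt_mul_of_pos_left h2 hx]

lemma log_upper (x : ℝ) (hx : 0 < x) : Real.log (1/x + 1) < (2*x+1) / (2*x*(x+1)) := by
  set u := Real.log (1/x + 1) with hu
  have hpos : (0:ℝ) < 1/x + 1 := by positivity
  have hu0 : 0 < u := Real.log_pos (by rw [lt_add_iff_pos_left]; positivity)
  have he : Real.exp u = 1/x + 1 := Real.exp_log hpos
  have h := Real.self_lt_sinh_iff.2 hu0
  rw [Real.sinh_eq, Real.exp_neg, he] at h
  have heq : (1/x + 1 - (1/x + 1)⁻¹)/2 = (2*x+1) / (2*x*(x+1)) := by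
    rw [show 1/x + 1 = (x+1)/x by field_simp; ring]
    rw [inv_div]
    field_simp
    ring
  linarith [heq ▸ h]

theorem core2 (x a : ℝ) (hx : 0 < x) (ha : 0 < a) (hc : 2*x*(x+1)*a < 1) :
    0 < 2+3*a+5*a^2+3*a^3 + x*(2-9*a+a^2+9*a^3) + x^2*(8-12*a-14*a^2+9*a^3) + x^3*(3*a^3-10*a^2) := by
  have hc' : 0 < 1 - 2*x*(x+1)*a := by linarith
  nlinarith [mul_pos hx ha, mul_pos (mul_pos hx hx) ha, mul_pos hc' hc', mul_pos hx hc', mul_pos (mul_pos hx hx) hc', mul_pos ha hc', mul_pos (mul_pos hx ha) hc', mul_pos (mul_pos (mul_pos hx hx) ha) hc', sq_nonneg (x*a), sq_nonneg a, mul_pos (mul_pos ha ha) hx]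

theorem convexity_ineq (x : ℝ) (hx : 0 < x) :
    3 * (Real.log (1 / x + 1)) ^ 3 * (x + 1) ^ 3 +
      (Real.log (1 / x + 1)) ^ 2 * (x + 1) * (-14 * x - 13) +
      19 * Real.log (1 / x + 1) * (x + 1) - 8 > 0 := by
  set L := Real.log (1/x + 1) with hL
  have h1 := log_lower x hx
  have h2 := log_upper x hx
  have hd : (0:ℝ) < 2*x+1 := by linarith
  have hd2 : (0:ℝ) < 2*x*(x+1) := by positivity
  have h1' : 2 < (2*x+1) * L := by
    rw [div_lt_iff₀ hd] at h1; linarith [h1]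
  have h2' : 2*x*(x+1)*L < 2*x+1 := by
    rw [lt_div_iff₀ hd2] at h2; linarith [h2]
  have hc : 2*x*(x+1)*((2*x+1)*L - 2) < 1 := by
    nlinarith [mul_lt_mul_of_pos_left h2' hd]
  have key := core2 x ((2*x+1)*L - 2) hx (by linarith) hc
  have hcube : (0:ℝ) < (2*x+1)^3 := by positivity
  nlinarith [key, hcube]
end

section
/- For all z > 0, (1 + z)²·ln(((1+z)² + 16)/(1+z)²) + (1 + z)² − 8z ≥ 0. -/
open Real

lemma log_tangent (x a : ℝ) (hx : 0 < x) (ha : 0 < a) :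
    Real.log a + 1 - a / x ≤ Real.log x := by
  have h := Real.log_le_sub_one_of_pos (show 0 < a / x by positivity)
  have h2 : Real.log (a / x) = Real.log a - Real.log x := Real.log_div (ne_of_gt ha) (ne_of_gt hx)
  linarith [h, h2.le, h2.ge]

theorem ineq_stmt11 (z : ℝ) (hz : 0 < z) :
    0 ≤ (1 + z) ^ 2 * Real.log (((1 + z) ^ 2 + 16) / (1 + z) ^ 2) +
      (1 + z) ^ 2 - 8 * z := by
  set t : ℝ := (1 + z) ^ 2 with ht
  have ht1 : 1 < t := by nlinarith
  have ht0 : 0 < t := by linarith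
  have hx : 0 < (t + 16) / t := by positivity
  rcases le_or_gt 6 z with h6 | h6
  · -- z ≥ 6 : log ≥ 0 and t - 8z ≥ 0
    have hlog : 0 ≤ Real.log ((t + 16) / t) := by
      apply Real.log_nonneg
      rw [le_div_iff₀ ht0]; linarith
    nlinarith [mul_nonneg ht0.le hlog]
  · have key : ∀ n : ℝ, (n : ℝ) + 1 - Real.exp n * t / (t + 16) ≤ Real.log ((t + 16) / t) := by
      intro n
      have := log_tangent ((t + 16) / t) (Real.exp n) hx (Real.exp_pos n)
      rw [Real.log_exp] at this
      have hdiv : Real.exp n / ((t + 16) / t) = Real.exp n * t / (t + 16) := by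
        field_simp
      linarith [hdiv.le, hdiv.ge, this]
    have he1 : Real.exp 1 < 2.7182818286 := Real.exp_one_lt_d9
    have he1p : (0:ℝ) < Real.exp 1 := Real.exp_pos 1
    have he2 : Real.exp 2 < 7.3890561 := by
      have : Real.exp 2 = Real.exp 1 * Real.exp 1 := by
        rw [← Real.exp_add]; norm_num
      rw [this]
      calc Real.exp 1 * Real.exp 1 < 2.7182818286 * 2.7182818286 :=
            mul_lt_mul'' he1 he1 he1p.le he1p.le
        _ ≤ 7.3890561 := by norm_num
    have ht16 : (0:ℝ) < t + 16 := by linarith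
    rcases le_or_gt z 1.1 with hc1 | hc1
    · have hk := key 2
      have hb : (2:ℝ) + 1 - 7.3890561 * t / (t + 16) ≤ Real.log ((t + 16) / t) := by
        have : Real.exp 2 * t / (t + 16) ≤ 7.3890561 * t / (t + 16) := by gcongr
        linarith
      have hlb : 0 ≤ t * ((2:ℝ) + 1 - 7.3890561 * t / (t + 16)) + t - 8 * z := by
        have expand : t * ((2:ℝ) + 1 - 7.3890561 * t / (t + 16)) + t - 8 * z =
            ((4 * t - 8 * z) * (t + 16) - 7.3890561 * t ^ 2) / (t + 16) := by
          field_simp; ring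
        rw [expand]
        apply div_nonneg _ ht16.le
        rw [ht]
        nlinarith [sq_nonneg z, sq_nonneg (z - 1), sq_nonneg (z * z - 1), hz.le, hc1]
      linarith [mul_le_mul_of_nonneg_left hb ht0.le]
    · rcases le_or_gt z 3.75 with hc2 | hc2
      · have hk := key 1
        have hb : (1:ℝ) + 1 - 2.7182818286 * t / (t + 16) ≤ Real.log ((t + 16) / t) := by
          have : Real.exp 1 * t / (t + 16) ≤ 2.7182818286 * t / (t + 16) := by gcongr
          linarith
        have hlb : 0 ≤ t * ((1:ℝ) + 1 - 2.7182818286 * t / (t + 16)) + t - 8 * z := by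
          have expand : t * ((1:ℝ) + 1 - 2.7182818286 * t / (t + 16)) + t - 8 * z =
              ((3 * t - 8 * z) * (t + 16) - 2.7182818286 * t ^ 2) / (t + 16) := by
            field_simp; ring
          rw [expand]
          apply div_nonneg _ ht16.le
          rw [ht]
          nlinarith [sq_nonneg (z - 2), sq_nonneg (z * z - 4), sq_nonneg z, hc1.le, hc2]
        linarith [mul_le_mul_of_nonneg_left hb ht0.le]
      · have hk := key 0
        have hb : (0:ℝ) + 1 - 1 * t / (t + 16) ≤ Real.log ((t + 16) / t) := by
          have h0 : Real.exp (0:ℝ) = 1 := Real.exp_zero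
          rw [h0] at hk; linarith
        have hlb : 0 ≤ t * ((0:ℝ) + 1 - 1 * t / (t + 16)) + t - 8 * z := by
          have expand : t * ((0:ℝ) + 1 - 1 * t / (t + 16)) + t - 8 * z =
              ((2 * t - 8 * z) * (t + 16) - t ^ 2) / (t + 16) := by
            field_simp; ring
          rw [expand]
          apply div_nonneg _ ht16.le
          rw [ht]
          nlinarith [sq_nonneg (z - 5), sq_nonneg (z * z - 25), sq_nonneg z, hc2.le, h6.le]
        linarith [mul_le_mul_of_nonneg_left hb ht0.le]
end

section
/- For all x with 0 < x < 1, x·ln((x + 1)/x) ≥ 2√x − x − 1/2. -/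
open Real

theorem ineq_stmt14 (x : ℝ) (hx0 : 0 < x) (hx1 : x < 1) :
    2 * Real.sqrt x - x - 1 / 2 ≤ x * Real.log ((x + 1) / x) := by
  set s := Real.sqrt x with hsdef
  have hs0 : 0 < s := Real.sqrt_pos.mpr hx0
  have hs2 : s ^ 2 = x := Real.sq_sqrt hx0.le
  set c := Real.sqrt (x + 1) with hcdef
  have hc0 : 0 < c := Real.sqrt_pos.mpr (by linarith)
  have hc2 : c ^ 2 = x + 1 := Real.sq_sqrt (by linarith)
  have hcs : 0 < c / s := div_pos hc0 hs0
  have hlog : Real.log ((x + 1) / x) = 2 * Real.log (c / s) := by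
    rw [show (x + 1) / x = (c / s) ^ 2 by rw [div_pow, hc2, hs2], Real.log_pow]
    push_cast; ring
  have hlb : 1 - s / c ≤ Real.log (c / s) := by
    have h := Real.one_sub_inv_le_log_of_pos hcs
    rwa [inv_div] at h
  have hA : 0 < 3 * s ^ 2 - 2 * s + 1 / 2 := by nlinarith [sq_nonneg (3 * s - 1)]
  have hsq : (2 * s ^ 3) ^ 2 ≤ ((3 * s ^ 2 - 2 * s + 1 / 2) * c) ^ 2 := by
    have hcc : ((3 * s ^ 2 - 2 * s + 1 / 2) * c) ^ 2
        = (3 * s ^ 2 - 2 * s + 1 / 2) ^ 2 * (s ^ 2 + 1) := by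
      rw [mul_pow, hc2, ← hs2]
    rw [hcc]
    nlinarith [sq_nonneg (1 - 4 * s + 4 * s ^ 2), sq_nonneg (5 * s - 12 * s ^ 2 + 7 * s ^ 3),
      sq_nonneg (13 * s ^ 2 - 18 * s ^ 3), sq_nonneg (s ^ 3)]
  have key : 2 * s ^ 3 ≤ (3 * s ^ 2 - 2 * s + 1 / 2) * c := by
    nlinarith [hsq, mul_pos hA hc0, pow_pos hs0 3]
  have hdiv : 2 * s ^ 3 / c ≤ 3 * s ^ 2 - 2 * s + 1 / 2 := (div_le_iff₀ hc0).mpr key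
  have heq : x * (2 * (1 - s / c)) = 2 * s ^ 2 - 2 * s ^ 3 / c := by
    rw [← hs2]; field_simp
  have h3 : x * (2 * (1 - s / c)) ≤ x * (2 * Real.log (c / s)) :=
    mul_le_mul_of_nonneg_left (by linarith) hx0.le
  rw [hlog]
  nlinarith [h3, heq, hdiv, hs2]
end

section
/- Let κ > 0 and let p̲ > 0 satisfy ln(1 + 1/(2κp̲)) = (μ − a)/p̲ − 1 with μ > a. If F(x) = 1 − p̲/(x − a) on [a + p̲, a + p̲ + 1/(2κ)] (with a mass point at the upper endpoint), then the mean of F equals μ, i.e., ∫ x dF(x) = μ. -/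
/-!
On `[a + p, a + p + c]` with `c = 1 / (2κ)` the density of `F` is `p / (x - a)²`, and
`x / (x - a)²` has the antiderivative `log (x - a) - a / (x - a)`. So the continuous part of the
mean is `p (log ((p + c) / p) + a / p - a / (p + c))`, and the atom at `a + p + c` contributes
`(a + p + c) p / (p + c)`. The terms in `a / (p + c)` cancel, and the defining equation turns
`p log ((p + c) / p)` into `μ - a - p`, leaving `μ`.
-/

open Real

theorem hasDerivAt_log_sub_sub_div_sub {a x : ℝ} (hx : a < x) :
    HasDerivAt (fun x => log (x - a) - a / (x - a)) (x / (x - a) ^ 2) x := by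
  have hxa : x - a ≠ 0 := (sub_pos.mpr hx).ne'
  have hsub : HasDerivAt (fun x : ℝ => x - a) 1 x := (hasDerivAt_id x).sub_const a
  refine ((hsub.log hxa).sub ((hasDerivAt_const x a).div hsub hxa)).congr_deriv ?_
  field_simp
  ring

theorem integral_div_sub_sq {a l u : ℝ} (hl : a < l) (hlu : l ≤ u) :
    ∫ x in l..u, x / (x - a) ^ 2 = log (u - a) - log (l - a) + a / (l - a) - a / (u - a) := by
  have hpos : ∀ x ∈ Set.uIcc l u, a < x := fun x hx => by
    rw [Set.uIcc_of_le hlu] at hx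
    exact hl.trans_le hx.1
  have hcont : ContinuousOn (fun x => x / (x - a) ^ 2) (Set.uIcc l u) :=
    continuousOn_id.div (by fun_prop) fun x hx => by
      have := hpos x hx
      positivity
  rw [intervalIntegral.integral_eq_sub_of_hasDerivAt
    (fun x hx => hasDerivAt_log_sub_sub_div_sub (hpos x hx)) hcont.intervalIntegrable]
  ring

theorem pareto_mean_general (κ μ a p : ℝ) (hκ : 0 < κ) (hp : 0 < p)
    (hroot : Real.log (1 + 1 / (2 * κ * p)) = (μ - a) / p - 1) :
    (∫ x in (a + p)..(a + p + 1 / (2 * κ)), x * (p / (x - a) ^ 2)) +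
      (a + p + 1 / (2 * κ)) * (p / (p + 1 / (2 * κ))) = μ := by
  set c := 1 / (2 * κ) with hc
  have hc0 : 0 < c := by positivity
  have hlog_ratio : log (p + c) - log p = (μ - a) / p - 1 := by
    rw [← hroot, ← log_div (by positivity) hp.ne', hc]
    congr 1
    field_simp
  have hcontinuous_part : ∫ x in (a + p)..(a + p + c), x * (p / (x - a) ^ 2)
      = p * (log (p + c) - log p + a / p - a / (p + c)) := by
    simp_rw [mul_div_left_comm _ p]
    rw [intervalIntegral.integral_const_mul,
      integral_div_sub_sq (by linarith) (by linarith)]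
    ring_nf
  rw [hcontinuous_part, hlog_ratio]
  field_simp
  ring

theorem pareto_mean (κ μ a p : ℝ) (hκ : 0 < κ) (hp : 0 < p) (hμ : a < μ)
    (hroot : Real.log (1 + 1 / (2 * κ * p)) = (μ - a) / p - 1) :
    (∫ x in (a + p)..(a + p + 1 / (2 * κ)), x * (p / (x - a) ^ 2)) +
      (a + p + 1 / (2 * κ)) * (p / (p + 1 / (2 * κ))) = μ :=
  pareto_mean_general κ μ a p hκ hp hroot
end
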